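/- Smallness of H relative to the square of Φ for small r: define, for r > 0 and w ∈ ℝ, H(r,w) := (3/2) ∫₀^w Ã(r,x)^{1/2} [ ∫₀^x Ã(r,y)^{1/2} (2 sin²(ry)/r²) dy ] dx. Then there exists r₁ > 0 such that for all r ∈ (0, r₁) and all w ∈ ℝ, |H(r,w)| ≤ (9/(8r²)) ( ∫₀^w Ã(r,x)^{1/2} dx )². -/

import Mathlib

open Real Set

/-- `Ã(r,y) = 1 + 2 sin²(ry) / r²`. -/
noncomputable def Atil (r y : ℝ) : ℝ := 1 + 2 * Real.sin (r * y) ^ 2 / r ^ 2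

/-- The auxiliary double integral
`H(r,w) = (3/2) ∫₀^w Ã(r,x)^{1/2} [∫₀^x Ã(r,y)^{1/2} (2 sin²(ry)/r²) dy] dx`. -/
noncomputable def Hfun (r w : ℝ) : ℝ :=
  (3/2) * ∫ x in (0:ℝ)..w, (Atil r x) ^ ((1:ℝ)/2) *
    ∫ y in (0:ℝ)..x, (Atil r y) ^ ((1:ℝ)/2) * (2 * Real.sin (r * y) ^ 2 / r ^ 2)

/-!
Write `s = sin (r y)`. Since `2 s² / r² = (3 + (4 s² - 3)) / (2 r²)`, the inner integral of `H` is
`(3 Φ(x) + Ψ(x)) / (2 r²)` with `Φ(x) = ∫₀ˣ √Ã` and `Ψ(x) = ∫₀ˣ √Ã (4 s² - 3)`. Once `Ψ ≤ 0` on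
`[0, ∞)`, the outer integral is at most `(3 / (2 r²)) ∫₀ʷ Φ' Φ = (3 / (2 r²)) Φ(w)² / 2`, which gives
the constant `9 / (8 r²)`; negative `w` follow because `H(r, ·)` is even and `Φ` is odd.

The integrand of `Ψ` is `π / r`-periodic, so it suffices to treat `0 ≤ x ≤ π / r`. To leading
order `√Ã ≈ √2 s / r`, and `√2 s (4 s² - 3) / r = -(√2 / r) sin (3 r y)` has nonpositive integral
over `[0, x]`. The corrections are: on `r y ≤ 1/2`, `√Ã ≥ √2 s / r + 1 / (1 + 3 y)` with
`4 s² - 3 ≤ -2`, a gain of `(2/3) log (1 + 3 / (2 r))`; beyond, `√Ã ≤ √2 s / r + r / 2` where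
`4 s² ≥ 3`, a loss of at most `π / 2 - 1/4`. The logarithm wins for small `r`.
-/

open MeasureTheory (volume)

namespace intervalIntegral

theorem integral_zero_neg_of_even {E : Type*} [NormedAddCommGroup E] [NormedSpace ℝ E]
    {f : ℝ → E} (hf : ∀ x, f (-x) = f x) (b : ℝ) :
    ∫ x in 0..-b, f x = -∫ x in 0..b, f x := by
  rw [← neg_eq_iff_eq_neg]
  simpa [hf, integral_symm 0 (-b)] using (integral_comp_neg (a := 0) (b := b) f).symm

theorem integral_zero_neg_of_odd {E : Type*} [NormedAddCommGroup E] [NormedSpace ℝ E]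
    {f : ℝ → E} (hf : ∀ x, f (-x) = -f x) (b : ℝ) :
    ∫ x in 0..-b, f x = ∫ x in 0..b, f x := by
  simpa [hf, integral_symm 0 (-b)] using (integral_comp_neg (a := 0) (b := b) f).symm

theorem integral_mul_primitive {f : ℝ → ℝ} (hf : Continuous f) (a b : ℝ) :
    ∫ x in a..b, f x * ∫ y in a..x, f y = (∫ x in a..b, f x) ^ 2 / 2 := by
  have hF : ∀ x, HasDerivAt (fun u => ∫ y in a..u, f y) (f x) x :=
    fun x => (hf.integral_hasStrictDerivAt a x).hasDerivAt
  have hcont : Continuous fun u => ∫ y in a..u, f y :=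
    continuous_primitive (fun _ _ => hf.intervalIntegrable _ _) a
  rw [integral_eq_sub_of_hasDerivAt (f := fun u => (∫ y in a..u, f y) ^ 2 / 2)
    (f' := fun x => f x * ∫ y in a..x, f y)
    (fun x _ => ((hF x).pow 2).div_const 2 |>.congr_deriv (by ring))
    ((hf.mul hcont).intervalIntegrable _ _)]
  simp

theorem integral_mul_primitive_le {f g : ℝ → ℝ} (hf : Continuous f) (hf₀ : ∀ x, 0 ≤ f x)
    (hg : Continuous g) {c w : ℝ} (hw : 0 ≤ w)
    (hgf : ∀ x ∈ Set.Icc 0 w, ∫ y in 0..x, g y ≤ c * ∫ y in 0..x, f y) :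
    ∫ x in 0..w, f x * ∫ y in 0..x, g y ≤ c * ((∫ x in 0..w, f x) ^ 2 / 2) := by
  have hprim : ∀ h : ℝ → ℝ, Continuous h → Continuous fun x => ∫ y in 0..x, h y :=
    fun h hh => continuous_primitive (fun _ _ => hh.intervalIntegrable _ _) 0
  rw [← integral_mul_primitive hf, ← integral_const_mul]
  refine integral_mono_on hw ((hf.mul (hprim g hg)).intervalIntegrable _ _)
    ((continuous_const.mul (hf.mul (hprim f hf))).intervalIntegrable _ _) fun x hx => ?_
  calc f x * ∫ y in 0..x, g y ≤ f x * (c * ∫ y in 0..x, f y) :=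
        mul_le_mul_of_nonneg_left (hgf x hx) (hf₀ x)
    _ = c * (f x * ∫ y in 0..x, f y) := by ring

theorem integral_sin_const_mul_nonneg {c : ℝ} (hc : 0 ≤ c) (x : ℝ) :
    0 ≤ ∫ y in 0..x, Real.sin (c * y) := by
  rcases hc.eq_or_lt with rfl | hc
  · simp
  rw [integral_comp_mul_left (fun y => Real.sin y) hc.ne', integral_sin]
  simp only [mul_zero, Real.cos_zero, smul_eq_mul]
  have := Real.cos_le_one (c * x)
  have : 0 ≤ c⁻¹ := by positivity
  nlinarith

theorem integral_inv_one_add_mul {c a : ℝ} (hc : 0 < c) (ha : 0 ≤ a) :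
    ∫ y in 0..a, (1 + c * y)⁻¹ = Real.log (1 + c * a) / c := by
  have := integral_comp_mul_add (fun y => y⁻¹) hc.ne' 1 (a := 0) (b := a)
  rw [show (fun y => (1 + c * y)⁻¹) = fun y => (c * y + 1)⁻¹ by ext; ring_nf, this,
    integral_inv_of_pos (by norm_num) (by positivity)]
  simp [add_comm, div_eq_inv_mul]

end intervalIntegral

open intervalIntegral

theorem Function.Periodic.intervalIntegral_nonpos {g : ℝ → ℝ} {T : ℝ}
    (hg : Function.Periodic g T) (hT : 0 < T) (h_int : ∀ a b, IntervalIntegrable g volume a b)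
    (h_period : ∀ t ∈ Icc 0 T, ∫ x in 0..t, g x ≤ 0) {t : ℝ} (ht : 0 ≤ t) :
    ∫ x in 0..t, g x ≤ 0 := by
  set ε := Int.fract (t / T) * T
  have hε : ε ∈ Icc 0 T := mem_Icc_of_Ico (Int.fract_div_mul_self_mem_Ico T t hT)
  have hn : (0 : ℝ) ≤ ⌊t / T⌋ := by exact_mod_cast Int.floor_nonneg.mpr (by positivity)
  rw [← Int.fract_div_mul_self_add_zsmul_eq T t hT.ne',
    ← integral_add_adjacent_intervals (h_int 0 ε) (h_int _ _),
    hg.intervalIntegral_add_zsmul_eq ⌊t / T⌋ ε h_int, hg.intervalIntegral_add_eq ε 0, zero_add,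
    zsmul_eq_mul]
  nlinarith [h_period ε hε, h_period T ⟨hT.le, le_rfl⟩]

theorem Atil_neg (r y : ℝ) : Atil r (-y) = Atil r y := by
  simp [Atil]

theorem continuous_sqrt_Atil (r : ℝ) : Continuous fun y => √(Atil r y) := by
  unfold Atil; fun_prop

theorem sqrt_two_mul_sin_div_le_sqrt_Atil (r y : ℝ) : √2 * sin (r * y) / r ≤ √(Atil r y) := by
  refine le_sqrt_of_sq_le ?_
  rw [div_pow, mul_pow, sq_sqrt zero_le_two, Atil]
  linarith

theorem sqrt_Atil_le {r y : ℝ} (hr : 0 < r) (hs₀ : 0 ≤ sin (r * y))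
    (hs : 3 ≤ 4 * sin (r * y) ^ 2) : √(Atil r y) ≤ √2 * sin (r * y) / r + r / 2 := by
  have hsq : (√2 * sin (r * y)) ^ 2 = 2 * sin (r * y) ^ 2 := by
    rw [mul_pow, sq_sqrt zero_le_two]
  have hs₁ : 1 ≤ √2 * sin (r * y) := by nlinarith [mul_nonneg (sqrt_nonneg 2) hs₀]
  rw [sqrt_le_iff]
  refine ⟨by positivity, ?_⟩
  have : (√2 * sin (r * y) / r + r / 2) ^ 2
      = 2 * sin (r * y) ^ 2 / r ^ 2 + √2 * sin (r * y) + r ^ 2 / 4 := by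
    rw [add_sq, div_pow, hsq]; field_simp; ring
  rw [this, Atil]
  nlinarith

theorem le_sqrt_Atil {r y : ℝ} (hr : 0 < r) (hy : 0 ≤ y) :
    √2 * sin (r * y) / r + (1 + 3 * y)⁻¹ ≤ √(Atil r y) := by
  have h2 : √2 ^ 2 = 2 := sq_sqrt zero_le_two
  have h2le : √2 ≤ 3 / 2 := by rw [sqrt_le_iff]; norm_num
  set B := (1 + 3 * y)⁻¹
  have hB : 0 < B := by positivity
  have hB₁ : B ≤ 1 := inv_le_one_of_one_le₀ (by linarith)
  have hBy : B * (1 + 3 * y) = 1 := inv_mul_cancel₀ (by positivity)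
  have hsin : sin (r * y) / r ≤ y := by
    rw [div_le_iff₀ hr, mul_comm y]; exact sin_le (by positivity)
  refine le_sqrt_of_sq_le ?_
  have : (√2 * sin (r * y) / r + B) ^ 2
      = 2 * sin (r * y) ^ 2 / r ^ 2 + 2 * √2 * (sin (r * y) / r) * B + B ^ 2 := by
    rw [add_sq, div_pow, mul_pow, h2]; ring
  rw [this, Atil]
  nlinarith [mul_le_mul_of_nonneg_right hsin hB.le, sqrt_nonneg 2,
    mul_le_mul_of_nonneg_right h2le (mul_nonneg hy hB.le)]

noncomputable def psi (r y : ℝ) : ℝ := √(Atil r y) * (4 * sin (r * y) ^ 2 - 3)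

theorem continuous_psi (r : ℝ) : Continuous (psi r) := by
  unfold psi; exact (continuous_sqrt_Atil r).mul (by fun_prop)

theorem psi_periodic {r : ℝ} (hr : r ≠ 0) : Function.Periodic (psi r) (π / r) := by
  intro y
  rw [psi, psi, Atil, Atil, mul_add, mul_div_cancel₀ _ hr, sin_add_pi, neg_sq]

theorem sqrt_two_mul_sin_div_mul_eq {r : ℝ} (hr : r ≠ 0) (y : ℝ) :
    √2 * sin (r * y) / r * (4 * sin (r * y) ^ 2 - 3) = -(√2 / r) * sin (3 * r * y) := by
  rw [mul_assoc, sin_three_mul]; field_simp; ring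

theorem psi_le_of_sin_nonneg {r y : ℝ} (hr : 0 < r) (hs : 0 ≤ sin (r * y)) :
    psi r y ≤ -(√2 / r) * sin (3 * r * y) + r / 2 := by
  rw [← sqrt_two_mul_sin_div_mul_eq hr.ne', psi]
  rcases le_total (4 * sin (r * y) ^ 2) 3 with h | h
  · nlinarith [mul_le_mul_of_nonpos_right (sqrt_two_mul_sin_div_le_sqrt_Atil r y)
      (by linarith : 4 * sin (r * y) ^ 2 - 3 ≤ 0)]
  · have hs₁ : 4 * sin (r * y) ^ 2 - 3 ≤ 1 := by nlinarith [sin_sq_le_one (r * y)]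
    nlinarith [mul_le_mul_of_nonneg_right (sqrt_Atil_le hr hs h)
      (by linarith : (0 : ℝ) ≤ 4 * sin (r * y) ^ 2 - 3)]

theorem psi_le_of_mul_le_half {r y : ℝ} (hr : 0 < r) (hy : 0 ≤ y) (hry : r * y ≤ 1 / 2) :
    psi r y ≤ -(√2 / r) * sin (3 * r * y) - 2 * (1 + 3 * y)⁻¹ := by
  rw [← sqrt_two_mul_sin_div_mul_eq hr.ne', psi]
  have hs₀ : 0 ≤ sin (r * y) :=
    sin_nonneg_of_nonneg_of_le_pi (by positivity) (by linarith [pi_gt_three])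
  have hs : sin (r * y) ≤ 1 / 2 := (sin_le (by positivity)).trans hry
  have hfac : 4 * sin (r * y) ^ 2 - 3 ≤ -2 := by nlinarith
  nlinarith [mul_le_mul_of_nonpos_right (le_sqrt_Atil hr hy)
      (by linarith : 4 * sin (r * y) ^ 2 - 3 ≤ 0),
    inv_pos.mpr (by positivity : (0 : ℝ) < 1 + 3 * y)]

theorem integral_psi_le_of_mul_le_half {r x : ℝ} (hr : 0 < r) (hx : 0 ≤ x)
    (hrx : r * x ≤ 1 / 2) :
    ∫ y in 0..x, psi r y
      ≤ -(√2 / r) * (∫ y in 0..x, sin (3 * r * y)) - 2 / 3 * log (1 + 3 * x) := by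
  have hinv : IntervalIntegrable (fun y => (1 + 3 * y)⁻¹) volume 0 x :=
    intervalIntegrable_inv (fun y hy => by rw [uIcc_of_le hx] at hy; linarith [hy.1])
      (by fun_prop)
  have hsin : IntervalIntegrable (fun y => sin (3 * r * y)) volume 0 x :=
    (by fun_prop : Continuous fun y => sin (3 * r * y)).intervalIntegrable _ _
  calc ∫ y in 0..x, psi r y
      ≤ ∫ y in 0..x, (-(√2 / r) * sin (3 * r * y) - 2 * (1 + 3 * y)⁻¹) :=
        integral_mono_on hx ((continuous_psi r).intervalIntegrable _ _)
          ((hsin.const_mul _).sub (hinv.const_mul _))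
          fun y hy => psi_le_of_mul_le_half hr hy.1 (by nlinarith [hy.2])
    _ = _ := by
        rw [integral_sub (hsin.const_mul _) (hinv.const_mul _), integral_const_mul,
          integral_const_mul, integral_inv_one_add_mul three_pos hx]
        ring

theorem integral_psi_le_of_sin_nonneg {r a x : ℝ} (hr : 0 < r) (hax : a ≤ x)
    (hs : ∀ y ∈ Icc a x, 0 ≤ sin (r * y)) :
    ∫ y in a..x, psi r y ≤ -(√2 / r) * (∫ y in a..x, sin (3 * r * y)) + r * (x - a) / 2 := by
  have hsin : IntervalIntegrable (fun y => sin (3 * r * y)) volume a x :=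
    (by fun_prop : Continuous fun y => sin (3 * r * y)).intervalIntegrable _ _
  calc ∫ y in a..x, psi r y
      ≤ ∫ y in a..x, (-(√2 / r) * sin (3 * r * y) + r / 2) :=
        integral_mono_on hax ((continuous_psi r).intervalIntegrable _ _)
          ((hsin.const_mul _).add intervalIntegrable_const)
          fun y hy => psi_le_of_sin_nonneg hr (hs y hy)
    _ = _ := by
        rw [integral_add (hsin.const_mul _) intervalIntegrable_const, integral_const_mul,
          intervalIntegral.integral_const, smul_eq_mul]
        ring

theorem three_le_log_one_add {r : ℝ} (hr₀ : 0 < r) (hr : r < 1 / 20) :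
    3 ≤ log (1 + 3 * (2 * r)⁻¹) := by
  rw [le_log_iff_exp_le (by positivity), show (3 : ℝ) = 1 + 1 + 1 by norm_num, exp_add, exp_add]
  have h30 : 30 ≤ 3 * (2 * r)⁻¹ := by
    rw [← div_eq_mul_inv, le_div_iff₀ (by positivity)]; linarith
  have he := exp_one_lt_three
  have he₀ := exp_pos 1
  nlinarith [mul_pos he₀ he₀]

theorem integral_psi_nonpos_of_le_pi_div {r x : ℝ} (hr₀ : 0 < r) (hr : r < 1 / 20)
    (hx : 0 ≤ x) (hxT : x ≤ π / r) : ∫ y in 0..x, psi r y ≤ 0 := by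
  have hsin_nonneg := integral_sin_const_mul_nonneg (by positivity : 0 ≤ 3 * r)
  have hc : 0 ≤ √2 / r := by positivity
  rcases le_total (r * x) (1 / 2) with hrx | hrx
  · linarith [integral_psi_le_of_mul_le_half hr₀ hx hrx, mul_nonneg hc (hsin_nonneg x),
      log_nonneg (by linarith : 1 ≤ 1 + 3 * x)]
  have hrxπ : r * x ≤ π := by rwa [← le_div_iff₀' hr₀]
  have hra : r * (2 * r)⁻¹ = 1 / 2 := by field_simp
  set a := (2 * r)⁻¹
  have hax : a ≤ x := le_of_mul_le_mul_left (hra ▸ hrx) hr₀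
  have hsplit : (∫ y in 0..a, psi r y) + ∫ y in a..x, psi r y = ∫ y in 0..x, psi r y :=
    integral_add_adjacent_intervals ((continuous_psi r).intervalIntegrable 0 a)
      ((continuous_psi r).intervalIntegrable a x)
  have hsin_split : (∫ y in 0..a, sin (3 * r * y)) + ∫ y in a..x, sin (3 * r * y)
      = ∫ y in 0..x, sin (3 * r * y) :=
    integral_add_adjacent_intervals
      ((by fun_prop : Continuous fun y => sin (3 * r * y)).intervalIntegrable 0 a)
      ((by fun_prop : Continuous fun y => sin (3 * r * y)).intervalIntegrable a x)
  have hfirst := integral_psi_le_of_mul_le_half hr₀ (by positivity) hra.le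
  have hsecond := integral_psi_le_of_sin_nonneg hr₀ hax fun y hy =>
    sin_nonneg_of_nonneg_of_le_pi (by nlinarith [hy.1, inv_pos.mpr (by positivity : 0 < 2 * r)])
      (by nlinarith [hy.2])
  have hmain := mul_nonneg hc (hsin_nonneg x)
  rw [← hsin_split, mul_add] at hmain
  linarith [three_le_log_one_add hr₀ hr, pi_le_four]

theorem integral_psi_nonpos {r x : ℝ} (hr₀ : 0 < r) (hr : r < 1 / 20) (hx : 0 ≤ x) :
    ∫ y in 0..x, psi r y ≤ 0 :=
  (psi_periodic hr₀.ne').intervalIntegral_nonpos (by positivity)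
    (fun _ _ => (continuous_psi r).intervalIntegrable _ _)
    (fun _ ht => integral_psi_nonpos_of_le_pi_div hr₀ hr ht.1 ht.2) hx

theorem integral_sqrt_Atil_mul_le {r x : ℝ} (hr₀ : 0 < r) (hr : r < 1 / 20) (hx : 0 ≤ x) :
    ∫ y in 0..x, √(Atil r y) * (2 * sin (r * y) ^ 2 / r ^ 2)
      ≤ 3 / (2 * r ^ 2) * ∫ y in 0..x, √(Atil r y) := by
  have hsplit : ∀ y, √(Atil r y) * (2 * sin (r * y) ^ 2 / r ^ 2)
      = 3 / (2 * r ^ 2) * √(Atil r y) + (2 * r ^ 2)⁻¹ * psi r y := by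
    intro y; rw [psi]; field_simp; ring
  simp_rw [hsplit]
  rw [integral_add (((continuous_sqrt_Atil r).intervalIntegrable _ _).const_mul _)
    (((continuous_psi r).intervalIntegrable _ _).const_mul _), integral_const_mul,
    integral_const_mul]
  nlinarith [integral_psi_nonpos hr₀ hr hx, inv_pos.mpr (by positivity : 0 < 2 * r ^ 2)]

theorem Hfun_neg (r w : ℝ) : Hfun r (-w) = Hfun r w := by
  rw [Hfun, Hfun, integral_zero_neg_of_odd]
  intro x
  rw [Atil_neg, integral_zero_neg_of_even (fun y => by rw [Atil_neg, mul_neg, sin_neg, neg_sq]),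
    mul_neg]

/-- Smallness of `H` relative to the square of `Φ` for small `r`. -/
theorem smallness_H_relative_Phi_sq :
    ∃ r₁ : ℝ, 0 < r₁ ∧
      ∀ r ∈ Set.Ioo (0:ℝ) r₁, ∀ w : ℝ,
        |Hfun r w| ≤ (9 / (8 * r ^ 2)) * (∫ x in (0:ℝ)..w, (Atil r x) ^ ((1:ℝ)/2)) ^ 2 := by
  refine ⟨1 / 20, by norm_num, ?_⟩
  rintro r ⟨hr₀, hr⟩ w
  wlog hw : 0 ≤ w generalizing w
  · have h := this (-w) (by linarith)
    rwa [Hfun_neg, integral_zero_neg_of_even (fun x => by rw [Atil_neg]), neg_sq] at h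
  simp only [Hfun, ← sqrt_eq_rpow]
  have hH₀ : 0 ≤ ∫ x in 0..w,
      √(Atil r x) * ∫ y in 0..x, √(Atil r y) * (2 * sin (r * y) ^ 2 / r ^ 2) :=
    integral_nonneg hw fun x hx => mul_nonneg (sqrt_nonneg _) <|
      integral_nonneg hx.1 fun y _ => by positivity
  have hH := integral_mul_primitive_le (continuous_sqrt_Atil r) (fun _ => sqrt_nonneg _)
    (g := fun y => √(Atil r y) * (2 * sin (r * y) ^ 2 / r ^ 2))
    ((continuous_sqrt_Atil r).mul (by fun_prop)) hw
    fun x hx => integral_sqrt_Atil_mul_le hr₀ hr hx.1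
  rw [abs_of_nonneg (by positivity)]
  calc _ ≤ 3 / 2 * (3 / (2 * r ^ 2) * ((∫ x in 0..w, √(Atil r x)) ^ 2 / 2)) := by gcongr
    _ = _ := by ring
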